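/- Let n, m, d be positive integers with 1 ≤ d ≤ n ≤ m, and let K be a field admitting a Galois extension L/K of degree m whose Galois group is cyclic. Then there exists a K-linear subspace C of the space of m×n matrices over K with dim_K C = m·(n − d + 1) such that every nonzero matrix in C has rank at least d; that is, an [m×n, m(n−d+1), d]_K MRD code exists. -/

import Mathlib

/-!
Gabidulin's construction. Let `σ` generate `Gal(L/K)` and `k = n - d`. A nonzero
`σ`-polynomial `∑_{i ≤ k} aᵢ σⁱ` (`aᵢ ∈ L`) has a kernel of `K`-dimension at most `k`: if
`v ≠ 0` lies in the kernel, precomposing with multiplication by `v` gives a `σ`-polynomial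
vanishing at `1`, which by summation by parts factors as `h ∘ (σ - 1)` with `h` of degree one
less, and `ker (σ - 1) = K` since `L/K` is Galois with group generated by `σ`. These maps form a
`K`-space of dimension `m (k + 1)`; restricting them to an `n`-dimensional subspace of `L` and
taking matrices gives a code whose nonzero members have rank at least `n - k = d`.
-/

open Finset Module LinearMap

theorem LinearMap.finrank_ker_comp_le_add {K V W U : Type*} [Field K] [AddCommGroup V]
    [Module K V] [AddCommGroup W] [Module K W] [AddCommGroup U] [Module K U]
    [FiniteDimensional K V] [FiniteDimensional K W] (h : W →ₗ[K] U) (s : V →ₗ[K] W) :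
    finrank K (ker (h ∘ₗ s)) ≤ finrank K (ker h) + finrank K (ker s) := by
  have := LinearMap.lift_rank_comap_le (f := s) (ker h)
  rw [← ker_comp, ← finrank_eq_rank, ← finrank_eq_rank, ← finrank_eq_rank] at this
  simpa only [Cardinal.lift_natCast, ← Nat.cast_add, Nat.cast_le] using this

theorem LinearMap.finrank_ker_comp_le_of_injective {K V W U : Type*} [Field K] [AddCommGroup V]
    [Module K V] [AddCommGroup W] [Module K W] [AddCommGroup U] [Module K U]
    [FiniteDimensional K V] [FiniteDimensional K W] (f : W →ₗ[K] U) {g : V →ₗ[K] W}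
    (hg : Function.Injective g) : finrank K (ker (f ∘ₗ g)) ≤ finrank K (ker f) := by
  have := f.finrank_ker_comp_le_add g
  rwa [ker_eq_bot.mpr hg, finrank_bot, add_zero] at this

theorem AlgEquiv.finrank_ker_sub_id_le_one {K L : Type*} [Field K] [Field L] [Algebra K L]
    [FiniteDimensional K L] [IsGalois K L] {σ : L ≃ₐ[K] L}
    (hσ : ∀ τ, τ ∈ Subgroup.zpowers σ) :
    finrank K (ker (σ.toLinearMap - LinearMap.id)) ≤ 1 := by
  have hker : ker (σ.toLinearMap - LinearMap.id) ≤ range (Algebra.linearMap K L) := by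
    intro x hx
    have hσx : σ ∈ MulAction.stabilizer (L ≃ₐ[K] L) x := by
      simpa [sub_eq_zero, AlgEquiv.smul_def] using hx
    obtain ⟨c, rfl⟩ := (IsGalois.mem_range_algebraMap_iff_fixed x).mpr
      fun τ ↦ Subgroup.zpowers_le.mpr hσx (hσ τ)
    exact ⟨c, rfl⟩
  calc finrank K (ker (σ.toLinearMap - LinearMap.id))
      ≤ finrank K (range (Algebra.linearMap K L)) := Submodule.finrank_mono hker
    _ ≤ 1 := (finrank_range_le _).trans (finrank_self K).le

section SigmaPoly

variable {K L : Type*} [Field K] [Field L] [Algebra K L]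

/-- The `σ`-polynomial `∑_{i ≤ k} a i • σ ^ i`; the coefficients `a i` with `i > k` are ignored. -/
def sigmaPoly (σ : L ≃ₐ[K] L) (k : ℕ) : (ℕ → L) →ₗ[K] L →ₗ[K] L :=
  ∑ i ∈ range (k + 1), (LinearMap.proj i).smulRight (σ ^ i).toLinearMap

variable (σ : L ≃ₐ[K] L)

theorem sigmaPoly_apply_apply (k : ℕ) (a : ℕ → L) (x : L) :
    sigmaPoly σ k a x = ∑ i ∈ range (k + 1), a i * (σ ^ i) x := by
  simp [sigmaPoly, LinearMap.sum_apply]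

theorem sigmaPoly_succ_of_coeff_eq_zero {k : ℕ} {a : ℕ → L} (ha : a (k + 1) = 0) :
    sigmaPoly σ (k + 1) a = sigmaPoly σ k a := by
  ext x
  simp [sigmaPoly_apply_apply, sum_range_succ _ (k + 1), ha]

theorem sigmaPoly_comp_mulLeft (k : ℕ) (a : ℕ → L) (v : L) :
    sigmaPoly σ k a ∘ₗ mulLeft K v = sigmaPoly σ k (fun i ↦ a i * (σ ^ i) v) := by
  ext x
  simp only [comp_apply, mulLeft_apply, sigmaPoly_apply_apply, map_mul, mul_assoc]

theorem sigmaPoly_succ_eq_comp_sub_id {k : ℕ} {b : ℕ → L}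
    (hb : ∑ i ∈ range (k + 2), b i = 0) :
    sigmaPoly σ (k + 1) b =
      sigmaPoly σ k (fun j ↦ -∑ i ∈ range (j + 1), b i) ∘ₗ (σ.toLinearMap - LinearMap.id) := by
  ext x
  have := sum_range_by_parts (fun i ↦ (σ ^ i) x) b (k + 2)
  simp only [smul_eq_mul, hb, mul_comm ((σ ^ _) _), pow_succ, AlgEquiv.mul_apply,
    ← map_sub, zero_mul, zero_sub] at this
  simp only [sigmaPoly_apply_apply, comp_apply, LinearMap.sub_apply, AlgEquiv.toLinearMap_apply,
    id_apply, neg_mul, sum_neg_distrib]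
  exact this

theorem finrank_ker_sigmaPoly_le [FiniteDimensional K L]
    (hfix : finrank K (ker (σ.toLinearMap - LinearMap.id)) ≤ 1) (k : ℕ) (a : ℕ → L)
    (ha : ∃ i ≤ k, a i ≠ 0) : finrank K (ker (sigmaPoly σ k a)) ≤ k := by
  induction k generalizing a with
  | zero =>
    obtain ⟨i, hi, hai⟩ := ha
    obtain rfl : i = 0 := by omega
    have : ker (sigmaPoly σ 0 a) = ⊥ := by
      refine ker_eq_bot'.mpr fun x hx ↦ ?_
      simpa [sigmaPoly_apply_apply, hai] using hx
    simp [this]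
  | succ k ih =>
    by_cases hak : a (k + 1) = 0
    · obtain ⟨i, hi, hai⟩ := ha
      rw [sigmaPoly_succ_of_coeff_eq_zero σ hak]
      exact (ih a ⟨i, by grind, hai⟩).trans k.le_succ
    by_cases hker : ker (sigmaPoly σ (k + 1) a) = ⊥
    · rw [hker, finrank_bot]
      exact Nat.zero_le _
    obtain ⟨v, hv, hv0⟩ := (Submodule.ne_bot_iff _).mp hker
    set f := sigmaPoly σ (k + 1) a
    set b : ℕ → L := fun i ↦ a i * (σ ^ i) v
    set c : ℕ → L := fun j ↦ -∑ i ∈ range (j + 1), b i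
    have hb : ∑ i ∈ range (k + 2), b i = 0 := by
      rw [mem_ker, sigmaPoly_apply_apply] at hv
      exact hv
    have hfactor : f ∘ₗ mulLeft K v = sigmaPoly σ k c ∘ₗ (σ.toLinearMap - LinearMap.id) := by
      rw [sigmaPoly_comp_mulLeft]
      exact sigmaPoly_succ_eq_comp_sub_id σ hb
    have hck : c k ≠ 0 := by
      rw [sum_range_succ, add_eq_zero_iff_eq_neg'] at hb
      simp only [c, ← hb, b]
      exact mul_ne_zero hak ((map_ne_zero _).mpr hv0)
    have hfv : (f ∘ₗ mulLeft K v) ∘ₗ mulLeft K v⁻¹ = f := by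
      rw [comp_assoc, ← mulLeft_mul, mul_inv_cancel₀ hv0, mulLeft_one, comp_id]
    calc finrank K (ker f)
        ≤ finrank K (ker (f ∘ₗ mulLeft K v)) := by
          have := (f ∘ₗ mulLeft K v).finrank_ker_comp_le_of_injective (g := mulLeft K v⁻¹)
            (mul_right_injective₀ (inv_ne_zero hv0))
          rwa [hfv] at this
      _ ≤ finrank K (ker (sigmaPoly σ k c)) + finrank K (ker (σ.toLinearMap - LinearMap.id)) := by
          rw [hfactor]
          exact (sigmaPoly σ k c).finrank_ker_comp_le_add _
      _ ≤ k + 1 := add_le_add (ih c ⟨k, le_rfl, hck⟩) hfix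

end SigmaPoly

theorem exists_rankMetricCode_of_finrank_ker_le {K V M N : Type*} [Field K]
    [AddCommGroup V] [Module K V] [FiniteDimensional K V] [AddCommGroup M] [Module K M]
    [FiniteDimensional K M] [AddCommGroup N] [Module K N] [FiniteDimensional K N] {m n k : ℕ}
    (hn : n ≤ finrank K M) (hm : finrank K N = m) (Φ : V →ₗ[K] M →ₗ[K] N)
    (hΦ : ∀ a ≠ 0, finrank K (ker (Φ a)) ≤ k) (hk : k < n) :
    ∃ C : Submodule K (Matrix (Fin m) (Fin n) K),
      finrank K C = finrank K V ∧ ∀ A ∈ C, A ≠ 0 → n - k ≤ A.rank := by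
  let b := finBasis K M
  let β := finBasisOfFinrankEq K N hm
  let G : (Fin n → K) →ₗ[K] M := Fintype.linearCombination K (b ∘ Fin.castLE hn)
  have hG : Function.Injective G := linearIndependent_iff_injective_fintypeLinearCombination.mp
    (b.linearIndependent.comp _ (Fin.castLE_injective hn))
  let Ψ : V →ₗ[K] Matrix (Fin m) (Fin n) K :=
    (LinearMap.toMatrix (Pi.basisFun K (Fin n)) β).toLinearMap ∘ₗ lcomp K N G ∘ₗ Φ
  have hrank : ∀ a ≠ 0, n - k ≤ (Ψ a).rank := by
    intro a ha
    have hrn := (Φ a ∘ₗ G).finrank_range_add_finrank_ker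
    have hker := (Φ a).finrank_ker_comp_le_of_injective hG
    rw [finrank_fin_fun] at hrn
    rw [show Ψ a = toMatrix (Pi.basisFun K (Fin n)) β (Φ a ∘ₗ G) from rfl,
      Matrix.rank_eq_finrank_range_toLin _ β (Pi.basisFun K (Fin n)), Matrix.toLin_toMatrix]
    have := hΦ a ha
    omega
  have hinj : Function.Injective Ψ := (injective_iff_map_eq_zero Ψ).mpr fun a h ↦ by
    by_contra ha
    have := hrank a ha
    rw [h, Matrix.rank_zero] at this
    omega
  refine ⟨range Ψ, finrank_range_of_inj hinj, ?_⟩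
  rintro _ ⟨a, rfl⟩ hA
  exact hrank a (by rintro rfl; exact hA (map_zero Ψ))

/-- if `K` admits a cyclic Galois extension of degree `m`, then
for all `1 ≤ d ≤ n ≤ m` there exists an `[m×n, m(n-d+1), d]_K` MRD code. -/
theorem existence_MRD (K L : Type*) [Field K] [Field L] [Algebra K L]
    [FiniteDimensional K L] [IsGalois K L] (hcyc : IsCyclic (L ≃ₐ[K] L))
    (m n d : ℕ) (hm : Module.finrank K L = m)
    (hd : 1 ≤ d) (hdn : d ≤ n) (hnm : n ≤ m) :
    ∃ C : Submodule K (Matrix (Fin m) (Fin n) K),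
      Module.finrank K C = m * (n - d + 1) ∧
        ∀ A ∈ C, A ≠ 0 → d ≤ A.rank := by
  obtain ⟨σ, hσ⟩ := hcyc.exists_generator
  set k := n - d
  let Φ : (Fin (k + 1) → L) →ₗ[K] L →ₗ[K] L :=
    sigmaPoly σ k ∘ₗ funLeft K L (Fin.ofNat (k + 1))
  have hΦ : ∀ a ≠ 0, finrank K (ker (Φ a)) ≤ k := by
    intro a ha
    obtain ⟨i, hi⟩ := Function.ne_iff.mp ha
    refine finrank_ker_sigmaPoly_le σ (AlgEquiv.finrank_ker_sub_id_le_one hσ) k _ ⟨i, by omega, ?_⟩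
    simpa [Φ, funLeft] using hi
  obtain ⟨C, hC, hrank⟩ :=
    exists_rankMetricCode_of_finrank_ker_le (hnm.trans hm.ge) hm Φ hΦ (by omega)
  refine ⟨C, ?_, fun A hA hA0 ↦ ?_⟩
  · simp [hC, Module.finrank_pi_fintype, hm, mul_comm, k]
  · have := hrank A hA hA0
    omega
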